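/- arXiv:1404.6711 — 2 statements merged into one kernel-verified Lean document; each statement's English description precedes it below -/
import Mathlib

section
/- Let R be a commutative noetherian ring, let 𝔞 and 𝔟 be ideals of R, and let 𝒮 be a Serre subcategory of R-modules. Then 𝒮 satisfies both the C_𝔞 and C_𝔟 conditions if and only if 𝒮 satisfies both the C_{𝔞+𝔟} and C_{𝔞𝔟} conditions, where 𝔞𝔟 is the product ideal. -/
universe u

open Submodule

variable {R : Type u} [CommRing R]

/-- `Γ_a(M)`, the `a`-torsion submodule of `M`: the set of elements annihilated by
some power of the ideal `a`. -/
def torsionGamma (a : Ideal R) (M : Type u) [AddCommGroup M] [Module R M] :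
    Submodule R M :=
  ⨆ n : ℕ, Submodule.torsionBySet R M ((a ^ n : Ideal R) : Set R)

/-- The class `S` satisfies the condition `C_a` on the module `M`:
if `Γ_a(M) = M` and `(0 :_M a) ∈ S` then `M ∈ S`. -/
def CCondOn (S : ModuleCat.{u} R → Prop) (a : Ideal R) (M : ModuleCat.{u} R) : Prop :=
  torsionGamma a M = ⊤ →
    S (ModuleCat.of R (Submodule.torsionBySet R M (a : Set R))) → S M

/-- The class `S` satisfies the condition `C_a` (on every `R`-module). -/
def CCond (S : ModuleCat.{u} R → Prop) (a : Ideal R) : Prop :=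
  ∀ M : ModuleCat.{u} R, CCondOn S a M

/-- The class `S` is closed under isomorphisms of `R`-modules. -/
def IsoClosed (S : ModuleCat.{u} R → Prop) : Prop :=
  ∀ ⦃M N : ModuleCat.{u} R⦄, (M ≃ₗ[R] N) → S M → S N

/-- `S` is a Serre subcategory of the category of `R`-modules: it is closed under
isomorphisms, contains the zero module, and is closed under submodules, quotient modules
and extensions. -/
structure IsSerreClass (S : ModuleCat.{u} R → Prop) : Prop where
  iso : IsoClosed S
  zero : ∀ M : ModuleCat.{u} R, Subsingleton M → S M
  subobj : ∀ (M : ModuleCat.{u} R) (N : Submodule R M), S M → S (ModuleCat.of R N)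
  quot : ∀ (M : ModuleCat.{u} R) (N : Submodule R M), S M → S (ModuleCat.of R (M ⧸ N))
  extension : ∀ (M : ModuleCat.{u} R) (N : Submodule R M),
    S (ModuleCat.of R N) → S (ModuleCat.of R (M ⧸ N)) → S M

/-!
An `(a + b)`-torsion module `M` is `a`-torsion, and `(0 :_M a)` is `b`-torsion with
`(0 :_{(0 :_M a)} b) = (0 :_M a + b)`, so `C_a` and `C_b` give `C_{a+b}`. For `C_{ab}`,
`Γ_a(M)` lies in `S` by `C_a` and `M / Γ_a(M)` is `b`-torsion; `(0 :_{M/Γ_a(M)} b)` is the image of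
`L = {x | b x ⊆ Γ_a(M)}`, and `L ∈ S` because multiplication by each of finitely many generators
of `b` maps `L` into `Γ_a(M)`, with common kernel `(0 :_M b) ⊆ Γ_b(M) ∈ S`.
Conversely, if `M` is `a`-torsion and `(0 :_M a) ∈ S`, then `C_{a+b}` puts `(0 :_M b)` in `S`, the
same generator argument (for `a`, which maps `(0 :_M ab)` into `(0 :_M b)`) puts `(0 :_M ab)` in
`S`, and `C_{ab}` gives `M ∈ S`.
-/

section Torsion

variable {M : Type u} [AddCommGroup M] [Module R M]

lemma mem_torsionBySet_iff_forall {s : Set R} {x : M} :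
    x ∈ torsionBySet R M s ↔ ∀ r ∈ s, r • x = 0 := by
  rw [mem_torsionBySet_iff]
  exact ⟨fun h r hr => h ⟨r, hr⟩, fun h r => h r r.2⟩

lemma torsionBySet_submodule (N : Submodule R M) (s : Set R) :
    torsionBySet R N s = (torsionBySet R M s).comap N.subtype := by
  ext x
  simp only [mem_comap, subtype_apply, mem_torsionBySet_iff_forall, ← coe_smul,
    ZeroMemClass.coe_eq_zero]

lemma torsionBySet_sup (c d : Ideal R) :
    torsionBySet R M ↑(c ⊔ d) = torsionBySet R M c ⊓ torsionBySet R M d := by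
  ext x
  simp only [mem_inf, mem_torsionBySet_iff_forall, SetLike.mem_coe]
  refine ⟨fun h => ⟨fun r hr => h r (mem_sup_left hr), fun r hr => h r (mem_sup_right hr)⟩, ?_⟩
  rintro ⟨hc, hd⟩ r hr
  obtain ⟨y, hy, z, hz, rfl⟩ := mem_sup.1 hr
  rw [add_smul, hc y hy, hd z hz, add_zero]

lemma mem_torsionGamma_iff {a : Ideal R} {x : M} :
    x ∈ torsionGamma a M ↔ ∃ n : ℕ, x ∈ torsionBySet R M ↑(a ^ n) :=
  mem_iSup_of_directed _ fun m n => ⟨m + n,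
    torsionBySet_le_torsionBySet_pow _ _ (Nat.le_add_right m n) a,
    torsionBySet_le_torsionBySet_pow _ _ (Nat.le_add_left n m) a⟩

lemma torsionBySet_le_torsionGamma (a : Ideal R) :
    torsionBySet R M a ≤ torsionGamma a M := fun x hx =>
  mem_torsionGamma_iff.2 ⟨1, by rwa [pow_one]⟩

lemma torsionGamma_antitone {c d : Ideal R} (h : c ≤ d) :
    torsionGamma d M ≤ torsionGamma c M :=
  iSup_mono fun n => torsionBySet_le_torsionBySet_of_subset (Ideal.pow_right_mono h n)

lemma torsionGamma_submodule (N : Submodule R M) (a : Ideal R) :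
    torsionGamma a N = (torsionGamma a M).comap N.subtype := by
  ext x
  simp only [mem_comap, mem_torsionGamma_iff, torsionBySet_submodule]

lemma torsionGamma_submodule_eq_top {N : Submodule R M} {a : Ideal R}
    (h : N ≤ torsionGamma a M) : torsionGamma a N = ⊤ := by
  rwa [torsionGamma_submodule, comap_subtype_eq_top]

lemma torsionGamma_inf_le_torsionGamma_sup (a b : Ideal R) :
    torsionGamma a M ⊓ torsionGamma b M ≤ torsionGamma (a ⊔ b) M := by
  rintro x ⟨hxa, hxb⟩
  obtain ⟨m, hm⟩ := mem_torsionGamma_iff.1 hxa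
  obtain ⟨n, hn⟩ := mem_torsionGamma_iff.1 hxb
  refine mem_torsionGamma_iff.2 ⟨m + n, torsionBySet_le_torsionBySet_of_subset
    Ideal.sup_pow_add_le_pow_sup_pow ?_⟩
  rw [torsionBySet_sup]
  exact ⟨hm, hn⟩

/-- Multiplying by `b ^ n` moves an element killed by `(a * b) ^ n` into `Γ_a(M)`. -/
lemma torsionGamma_mul_le_comap_mkQ (a b : Ideal R) :
    torsionGamma (a * b) M ≤ (torsionGamma b (M ⧸ torsionGamma a M)).comap (mkQ _) := by
  intro x hx
  obtain ⟨n, hn⟩ := mem_torsionGamma_iff.1 hx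
  refine mem_torsionGamma_iff.2 ⟨n, mem_torsionBySet_iff_forall.2 fun s hs => ?_⟩
  rw [mkQ_apply, ← Quotient.mk_smul, Quotient.mk_eq_zero, mem_torsionGamma_iff]
  refine ⟨n, mem_torsionBySet_iff_forall.2 fun r hr => ?_⟩
  rw [smul_smul]
  exact mem_torsionBySet_iff_forall.1 hn _ (mul_pow a b n ▸ Ideal.mul_mem_mul hr hs)

lemma torsionBySet_le_comap {M' : Type u} [AddCommGroup M'] [Module R M'] (f : M →ₗ[R] M')
    (s : Set R) : torsionBySet R M s ≤ (torsionBySet R M' s).comap f := fun x hx =>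
  mem_torsionBySet_iff_forall.2 fun r hr => by
    rw [← map_smul, mem_torsionBySet_iff_forall.1 hx r hr, map_zero]

lemma smul_comap_mkQ_torsionBySet_le (N : Submodule R M) (b : Ideal R) :
    b • (torsionBySet R (M ⧸ N) b).comap N.mkQ ≤ N :=
  smul_le.2 fun r hr x hx => by
    rw [← Quotient.mk_eq_zero, Quotient.mk_smul]
    exact mem_torsionBySet_iff_forall.1 hx r hr

lemma smul_torsionBySet_mul_le (a b : Ideal R) :
    a • torsionBySet R M ↑(a * b) ≤ torsionBySet R M b :=
  smul_le.2 fun r hr x hx => mem_torsionBySet_iff_forall.2 fun s hs => by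
    rw [smul_smul, mul_comm]
    exact mem_torsionBySet_iff_forall.1 hx _ (Ideal.mul_mem_mul hr hs)

end Torsion

namespace IsSerreClass

variable {S : ModuleCat.{u} R → Prop} (hS : IsSerreClass S)
  {A B M : Type u} [AddCommGroup A] [Module R A] [AddCommGroup B] [Module R B]
  [AddCommGroup M] [Module R M]
include hS

lemma of_injective (f : A →ₗ[R] B) (hf : Function.Injective f) (hB : S (.of R B)) :
    S (.of R A) :=
  hS.iso (M := .of R (LinearMap.range f)) (LinearEquiv.ofInjective f hf).symm
    (hS.subobj _ _ hB)

lemma of_surjective (f : A →ₗ[R] B) (hf : Function.Surjective f) (hA : S (.of R A)) :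
    S (.of R B) :=
  hS.iso (M := .of R (A ⧸ LinearMap.ker f)) (f.quotKerEquivOfSurjective hf) (hS.quot _ _ hA)

lemma of_ker_of_range (f : A →ₗ[R] B) (hker : S (.of R (LinearMap.ker f)))
    (hrange : S (.of R (LinearMap.range f))) : S (.of R A) :=
  hS.extension (.of R A) _ hker <|
    hS.iso (M := .of R (LinearMap.range f)) f.quotKerEquivRange.symm hrange

lemma of_le {P Q : Submodule R M} (h : P ≤ Q) (hQ : S (.of R Q)) : S (.of R P) :=
  hS.of_injective (inclusion h) (inclusion_injective h) hQ

lemma map (f : M →ₗ[R] B) {P : Submodule R M} (hP : S (.of R P)) : S (.of R (P.map f)) :=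
  hS.of_surjective (f.submoduleMap P) (f.submoduleMap_surjective P) hP

lemma comap_subtype {X P : Submodule R M} (h : S (.of R ↥(X ⊓ P))) :
    S (.of R (P.comap X.subtype)) :=
  hS.of_injective (X.subtype.restrict fun x hx => mem_inf.2 ⟨x.2, hx⟩)
    (fun _ _ h => Subtype.ext (Subtype.ext congr(($h : M)))) h

lemma of_smul_mem {X Z : Submodule R M} {r : R} (hXZ : ∀ x ∈ X, r • x ∈ Z)
    (hZ : S (.of R Z)) (hX : S (.of R ↥(X ⊓ torsionBy R M r))) : S (.of R X) := by
  have hker : LinearMap.ker (r • X.subtype) = (torsionBy R M r).comap X.subtype := by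
    ext
    simp [mem_torsionBy_iff]
  refine hS.of_ker_of_range (r • X.subtype) (hker ▸ hS.comap_subtype hX) (hS.of_le ?_ hZ)
  rintro _ ⟨x, rfl⟩
  exact hXZ x x.2

lemma of_ideal_smul_le {c : Ideal R} (hc : c.FG) {X Z : Submodule R M} (hXZ : c • X ≤ Z)
    (hZ : S (.of R Z)) (hX : S (.of R ↥(X ⊓ torsionBySet R M c))) : S (.of R X) := by
  induction c, hc using Submodule.fg_induction generalizing X with
  | singleton r =>
    rw [torsionBySet_span_singleton_eq] at hX
    exact hS.of_smul_mem (fun x hx => hXZ (smul_mem_smul (mem_span_singleton_self r) hx)) hZ hX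
  | sup c d _ _ ihc ihd =>
    rw [sup_smul, sup_le_iff] at hXZ
    refine ihd hXZ.2 (ihc (le_trans (smul_mono_right _ inf_le_left) hXZ.1) ?_)
    rwa [inf_assoc, inf_comm (torsionBySet R M d), ← torsionBySet_sup]

end IsSerreClass

namespace CCond

variable {S : ModuleCat.{u} R → Prop} (hS : IsSerreClass S) {a b : Ideal R}
include hS

lemma of_le_torsionGamma {c : Ideal R} (hc : CCond S c) {M : Type u} [AddCommGroup M]
    [Module R M] {N P : Submodule R M} (hN : N ≤ torsionGamma c M)
    (hP : N ⊓ torsionBySet R M c ≤ P) (hSP : S (.of R P)) : S (.of R N) :=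
  hc (.of R N) (torsionGamma_submodule_eq_top hN) <| by
    rw [torsionBySet_submodule]
    exact hS.comap_subtype (hS.of_le hP hSP)

lemma add (ha : CCond S a) (hb : CCond S b) : CCond S (a + b) := by
  intro M hM hsoc
  have hW : S (.of R (torsionBySet R M a)) :=
    hb.of_le_torsionGamma hS (le_top.trans (hM ▸ torsionGamma_antitone le_sup_right))
      (torsionBySet_sup a b).ge hsoc
  exact ha M (top_unique (hM ▸ torsionGamma_antitone le_sup_left)) hW

lemma mul [IsNoetherianRing R] (ha : CCond S a) (hb : CCond S b) : CCond S (a * b) := by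
  intro M hM hsoc
  set N := torsionGamma a M
  have hN : S (.of R N) := ha.of_le_torsionGamma hS le_rfl
    (inf_le_right.trans (torsionBySet_le_torsionBySet_of_subset Ideal.mul_le_left)) hsoc
  have hΓb : S (.of R (torsionGamma b M)) := hb.of_le_torsionGamma hS le_rfl
    (inf_le_right.trans (torsionBySet_le_torsionBySet_of_subset Ideal.mul_le_right)) hsoc
  set L := (torsionBySet R (M ⧸ N) b).comap N.mkQ
  have hL : S (.of R L) := by
    refine hS.of_ideal_smul_le (IsNoetherian.noetherian b) (smul_comap_mkQ_torsionBySet_le N b)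
      hN ?_
    rw [inf_eq_right.2 (torsionBySet_le_comap N.mkQ b)]
    exact hS.of_le (torsionBySet_le_torsionGamma b) hΓb
  have hK : S (.of R (torsionBySet R (M ⧸ N) b)) :=
    map_comap_eq_of_surjective N.mkQ_surjective (torsionBySet R (M ⧸ N) b) ▸ hS.map N.mkQ hL
  have hQ : torsionGamma b (M ⧸ N) = ⊤ := by
    rw [eq_top_iff, ← range_mkQ N, ← Submodule.map_top, ← hM]
    exact map_le_iff_le_comap.2 (torsionGamma_mul_le_comap_mkQ a b)
  exact hS.extension M N hN (hb (.of R (M ⧸ N)) hQ hK)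

lemma of_add_of_mul [IsNoetherianRing R] (hadd : CCond S (a + b)) (hmul : CCond S (a * b)) :
    CCond S a := by
  intro M hM hsoc
  have hMb : S (.of R (torsionBySet R M b)) :=
    hadd.of_le_torsionGamma hS
      ((le_inf (hM ▸ le_top) (torsionBySet_le_torsionGamma b)).trans
        (torsionGamma_inf_le_torsionGamma_sup a b))
      (inf_le_right.trans (torsionBySet_le_torsionBySet_of_subset (le_sup_left : a ≤ a ⊔ b)))
      hsoc
  have hMab : S (.of R (torsionBySet R M ↑(a * b))) :=
    hS.of_ideal_smul_le (IsNoetherian.noetherian a) (smul_torsionBySet_mul_le a b) hMb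
      (by rwa [inf_eq_right.2 (torsionBySet_le_torsionBySet_of_subset Ideal.mul_le_left)])
  exact hmul M (top_unique (hM ▸ torsionGamma_antitone Ideal.mul_le_left)) hMab

end CCond

/-- A Serre subcategory `S` satisfies both `C_a` and `C_b` if and only if it satisfies
both `C_{a+b}` and `C_{ab}`. -/
theorem stmt7 [IsNoetherianRing R] (a b : Ideal R)
    (S : ModuleCat.{u} R → Prop)
    (hS : IsSerreClass S) :
    (CCond S a ∧ CCond S b) ↔ (CCond S (a + b) ∧ CCond S (a * b)) :=
  ⟨fun ⟨ha, hb⟩ => ⟨CCond.add hS ha hb, CCond.mul hS ha hb⟩, fun ⟨hadd, hmul⟩ =>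
    ⟨CCond.of_add_of_mul hS hadd hmul,
      CCond.of_add_of_mul hS (add_comm a b ▸ hadd) (mul_comm a b ▸ hmul)⟩⟩
end

section
/- Let R be a commutative noetherian ring, let 𝔞 be an ideal of R, and let 𝒮 be a torsion subcategory of R-modules, i.e. a Serre subcategory that is moreover closed under arbitrary direct sums. Then 𝒮 satisfies the C_𝔞 condition. -/
universe u

open Submodule

variable {R : Type u} [CommRing R]

open DirectSum

/-! Write `a = (x₁, …, xₖ)`. Multiplication by the `xᵢ` maps `(0 :_M aⁿ⁺¹)` into `(0 :_M aⁿ)ᵏ`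
with kernel inside `(0 :_M a)`, so by induction every `(0 :_M aⁿ)` lies in `S`. An `a`-torsion
module is the union of these submodules, hence a quotient of their direct sum. -/

def IsClosedUnderDirectSums (S : ModuleCat.{u} R → Prop) : Prop :=
  ∀ (I : Type u) (f : I → ModuleCat.{u} R), (∀ i, S (f i)) → S (ModuleCat.of R (⨁ i, f i))

theorem smul_mem_torsionBySet_of_mem_mul {M : Type*} [AddCommGroup M] [Module R M]
    {I J : Ideal R} {x : R} (hx : x ∈ J) {m : M}
    (hm : m ∈ torsionBySet R M ((I * J : Ideal R) : Set R)) :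
    x • m ∈ torsionBySet R M (I : Set R) := by
  rw [mem_torsionBySet_iff] at hm ⊢
  rintro ⟨r, hr⟩
  rw [smul_smul]
  exact hm ⟨r * x, Ideal.mul_mem_mul hr hx⟩

namespace IsSerreClass

variable {S : ModuleCat.{u} R → Prop} {M N : Type u} [AddCommGroup M] [Module R M]
  [AddCommGroup N] [Module R N]

theorem of_injective_s16 (hS : IsSerreClass S) (f : M →ₗ[R] N) (hf : Function.Injective f)
    (hN : S (ModuleCat.of R N)) : S (ModuleCat.of R M) :=
  hS.iso (M := ModuleCat.of R (LinearMap.range f))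
    (LinearEquiv.ofInjective f hf).symm (hS.subobj (ModuleCat.of R N) _ hN)

theorem of_surjective_s16 (hS : IsSerreClass S) (f : M →ₗ[R] N) (hf : Function.Surjective f)
    (hM : S (ModuleCat.of R M)) : S (ModuleCat.of R N) :=
  hS.iso (M := ModuleCat.of R (M ⧸ LinearMap.ker f))
    (f.quotKerEquivOfSurjective hf) (hS.quot (ModuleCat.of R M) _ hM)

theorem of_ker_of_codomain (hS : IsSerreClass S) (f : M →ₗ[R] N)
    (hker : S (ModuleCat.of R (LinearMap.ker f))) (hN : S (ModuleCat.of R N)) :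
    S (ModuleCat.of R M) :=
  hS.extension (ModuleCat.of R M) (LinearMap.ker f) hker <|
    hS.iso (M := ModuleCat.of R (LinearMap.range f)) f.quotKerEquivRange.symm
      (hS.subobj (ModuleCat.of R N) _ hN)

theorem pi_fintype (hS : IsSerreClass S) (hsum : IsClosedUnderDirectSums S)
    (ι : Type u) [Fintype ι] (hN : S (ModuleCat.of R N)) : S (ModuleCat.of R (ι → N)) :=
  hS.iso (DirectSum.linearEquivFunOnFintype R ι fun _ => N)
    (hsum ι (fun _ => ModuleCat.of R N) fun _ => hN)

theorem of_iSup_eq_top (hS : IsSerreClass S) (hsum : IsClosedUnderDirectSums S)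
    {ι : Type u} (p : ι → Submodule R M) (hp : ∀ i, S (ModuleCat.of R (p i)))
    (htop : ⨆ i, p i = ⊤) : S (ModuleCat.of R M) := by
  classical
  let φ : (⨁ i, p i) →ₗ[R] M := DirectSum.toModule R ι M fun i => (p i).subtype
  have hφ : Function.Surjective φ := by
    rw [← LinearMap.range_eq_top, ← htop]
    exact (iSup_eq_range_dfinsupp_lsum p).symm
  exact hS.of_surjective_s16 φ hφ (hsum ι (fun i => ModuleCat.of R (p i)) hp)

theorem torsionBySet_mul (hS : IsSerreClass S) (hsum : IsClosedUnderDirectSums S)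
    (I : Ideal R) (s : Finset R)
    (hI : S (ModuleCat.of R (torsionBySet R M (I : Set R))))
    (hJ : S (ModuleCat.of R (torsionBySet R M (Ideal.span (s : Set R) : Set R)))) :
    S (ModuleCat.of R (torsionBySet R M ((I * Ideal.span (s : Set R) : Ideal R) : Set R))) := by
  let ψ : torsionBySet R M ((I * Ideal.span (s : Set R) : Ideal R) : Set R) →ₗ[R]
      (s → torsionBySet R M (I : Set R)) :=
    LinearMap.pi fun x => (DistribSMul.toLinearMap R M (x : R)).restrict
      fun _ hm => smul_mem_torsionBySet_of_mem_mul (Ideal.subset_span x.2) hm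
  have hker : ∀ k : LinearMap.ker ψ,
      k.1.1 ∈ torsionBySet R M (Ideal.span (s : Set R) : Set R) := by
    rintro ⟨k, hk⟩
    rw [← torsionBySet_eq_torsionBySet_span, mem_torsionBySet_iff]
    exact fun x => congrArg Subtype.val (congrFun hk x)
  let ι := LinearMap.codRestrict _ ((torsionBySet R M _).subtype ∘ₗ (LinearMap.ker ψ).subtype)
    hker
  have hι : Function.Injective ι := (LinearMap.injective_codRestrict_iff hker).2 <|
    Subtype.val_injective.comp Subtype.val_injective
  exact hS.of_ker_of_codomain ψ (hS.of_injective_s16 ι hι hJ) (hS.pi_fintype hsum s hI)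

end IsSerreClass

/-- A torsion subcategory (a Serre subcategory closed under arbitrary direct sums)
satisfies the `C_a` condition for every ideal `a`. -/
theorem stmt16 [IsNoetherianRing R] (a : Ideal R)
    (S : ModuleCat.{u} R → Prop)
    (hS : IsSerreClass S)
    (hsum : ∀ (I : Type u) (f : I → ModuleCat.{u} R),
      (∀ i, S (f i)) → S (ModuleCat.of R (⨁ i, f i))) :
    CCond S a := by
  intro M hΓ ha
  obtain ⟨s, hs⟩ : a.FG := IsNoetherian.noetherian a
  have hpow : ∀ n, S (ModuleCat.of R (torsionBySet R M ((a ^ n : Ideal R) : Set R))) := by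
    intro n
    induction n with
    | zero =>
      refine hS.zero _ ?_
      rw [pow_zero, Ideal.one_eq_top, Submodule.top_coe, torsionBySet_univ]
      infer_instance
    | succ n ih =>
      have h := hS.torsionBySet_mul hsum _ s ih (hs ▸ ha)
      rwa [hs, ← pow_succ] at h
  refine hS.of_iSup_eq_top hsum (fun n : ULift ℕ => torsionBySet R M _) (fun n => hpow n.down) ?_
  rw [← hΓ, torsionGamma]
  exact Equiv.ulift.surjective.iSup_comp fun n => torsionBySet R M ((a ^ n : Ideal R) : Set R)
end
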